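/- For every odd integer k ≥ 3, there exists a constant c > 0 (depending only on k) such that for every sufficiently large n there exist a set P of n points in ℝ³ and positive distances δ₁, …, δ_k for which P spans at least c · n^{(k+1)/2} k-chains. That is, C⁽³⁾_k(n) = Ω(n^{(k+1)/2}). -/

import Mathlib

/-- The number of `k`-chains spanned by a finite point set `P` in `ℝ^d` with respect to a
sequence of distances `δ : Fin k → ℝ`: tuples `(p 0, …, p k)` of pairwise distinct points of
`P` with `dist (p j) (p (j+1)) = δ j` for all `j`. -/
noncomputable def chainCount (d k : ℕ) (P : Finset (EuclideanSpace ℝ (Fin d)))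
    (δ : Fin k → ℝ) : ℕ :=
  Set.ncard {p : Fin (k + 1) → EuclideanSpace ℝ (Fin d) |
    (∀ i, p i ∈ P) ∧ Function.Injective p ∧
    ∀ j : Fin k, dist (p j.castSucc) (p j.succ) = δ j}

/-- `maxChains d k n` is the maximum number of `k`-chains spanned by a set of `n` points in
`ℝ^d`, over all sequences of positive distances. -/
noncomputable def maxChains (d k n : ℕ) : ℕ :=
  sSup {m | ∃ (P : Finset (EuclideanSpace ℝ (Fin d))) (δ : Fin k → ℝ),
    P.card = n ∧ (∀ j, 0 < δ j) ∧ m = chainCount d k P δ}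

/-!
Stack `k + 1` horizontal layers at heights `0, 1, …, k`: at even heights a circle of `t` points
of radius `1` around the `z`-axis, at odd heights the single point of the axis. Each circle
point is at distance `√2` from the axis points one level up and one level down, so choosing
one circle point at each of the `(k + 2) / 2` even heights gives `t ^ ((k + 2) / 2)` chains
with all distances `√2` on at most `(k + 1) t` points. Taking `t = n / (k + 1)` and padding
with arbitrary points gives `≳ n ^ ((k + 1) / 2)` chains when `k` is odd.
-/

open Real Finset

local notation "ℝ³" => EuclideanSpace ℝ (Fin 3)

section Chains

variable {d k : ℕ}

lemma finite_chains (P : Finset (EuclideanSpace ℝ (Fin d))) (δ : Fin k → ℝ) :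
    {p : Fin (k + 1) → EuclideanSpace ℝ (Fin d) |
      (∀ i, p i ∈ P) ∧ Function.Injective p ∧
      ∀ j : Fin k, dist (p j.castSucc) (p j.succ) = δ j}.Finite :=
  (Set.Finite.pi fun _ => P.finite_toSet).subset fun _ hp => Set.mem_univ_pi.2 hp.1

lemma chainCount_mono {P Q : Finset (EuclideanSpace ℝ (Fin d))} (h : P ⊆ Q)
    (δ : Fin k → ℝ) : chainCount d k P δ ≤ chainCount d k Q δ :=
  Set.ncard_le_ncard (fun _ hp => ⟨fun i => h (hp.1 i), hp.2⟩) (finite_chains Q δ)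

lemma card_le_chainCount {ι : Type*} [Finite ι] {P : Finset (EuclideanSpace ℝ (Fin d))}
    {δ : Fin k → ℝ} (Φ : ι → Fin (k + 1) → EuclideanSpace ℝ (Fin d))
    (hΦ : Function.Injective Φ)
    (hchain : ∀ a, (∀ i, Φ a i ∈ P) ∧ Function.Injective (Φ a) ∧
      ∀ j : Fin k, dist (Φ a j.castSucc) (Φ a j.succ) = δ j) :
    Nat.card ι ≤ chainCount d k P δ := by
  rw [← Set.ncard_range_of_injective hΦ]
  exact Set.ncard_le_ncard (Set.range_subset_iff.2 hchain) (finite_chains P δ)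

end Chains

section Layers

/-- The angles `(i + 1)⁻¹` lie in `(0, 1] ⊆ [0, π]`, where `cos` is injective. -/
noncomputable def layerPt (l i : ℕ) : ℝ³ :=
  if Even l then !₂[cos (i + 1 : ℝ)⁻¹, sin (i + 1 : ℝ)⁻¹, l] else !₂[0, 0, l]

@[simp] lemma layerPt_apply_two (l i : ℕ) : layerPt l i 2 = l := by
  unfold layerPt; split_ifs <;> simp

lemma dist_layerPt_succ (l i i' : ℕ) : dist (layerPt l i) (layerPt (l + 1) i') = √2 := by
  have circle_axis : ∀ θ z w : ℝ, (z - w) ^ 2 = 1 →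
      dist (!₂[cos θ, sin θ, z] : ℝ³) !₂[0, 0, w] = √2 := by
    intro θ z w h
    simp only [EuclideanSpace.dist_eq, Fin.sum_univ_three, Real.dist_eq, sq_abs]
    simp [h, cos_sq_add_sin_sq, one_add_one_eq_two]
  rcases Nat.even_or_odd l with hl | hl
  · simp only [layerPt, hl, Nat.not_even_iff_odd.2 hl.add_one, if_true, if_false]
    exact circle_axis _ _ _ (by push_cast; ring)
  · simp only [layerPt, Nat.not_even_iff_odd.2 hl, hl.add_one, if_true, if_false]
    rw [dist_comm]
    exact circle_axis _ _ _ (by push_cast; ring)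

lemma layerPt_injective {l : ℕ} (hl : Even l) : Function.Injective (layerPt l) := by
  intro i i' h
  have hmem : ∀ n : ℕ, (n + 1 : ℝ)⁻¹ ∈ Set.Icc 0 π := fun n =>
    ⟨by positivity, (inv_le_one_of_one_le₀ (by simp)).trans (by linarith [pi_gt_three])⟩
  have h0 := congrFun (congrArg (⇑) h) 0
  simp only [layerPt, hl, if_true] at h0
  simpa using injOn_cos (hmem i) (hmem i') (by simpa using h0)

noncomputable def layers (L t : ℕ) : Finset ℝ³ :=
  image₂ layerPt (range L) (range t)

lemma layerPt_mem_layers {L t l i : ℕ} (hl : l < L) (hi : i < t) : layerPt l i ∈ layers L t :=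
  mem_image₂_of_mem (mem_range.2 hl) (mem_range.2 hi)

lemma card_layers_le (L t : ℕ) : #(layers L t) ≤ L * t := by
  simpa [layers] using card_image₂_le layerPt (range L) (range t)

lemma pow_le_chainCount_layers (k t : ℕ) :
    t ^ ((k + 2) / 2) ≤ chainCount 3 k (layers (k + 1) t) (fun _ => √2) := by
  let Φ : (Fin ((k + 2) / 2) → Fin t) → Fin (k + 1) → ℝ³ :=
    fun f l => layerPt l (f ⟨l / 2, by omega⟩)
  have hΦ : Function.Injective Φ := by
    intro f g h
    funext j
    have hj := congrFun h ⟨2 * j, by omega⟩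
    simp only [Φ, show 2 * (j : ℕ) / 2 = j by omega] at hj
    exact Fin.ext (layerPt_injective (even_two_mul _) hj)
  have hchain : ∀ f, (∀ l, Φ f l ∈ layers (k + 1) t) ∧ Function.Injective (Φ f) ∧
      ∀ j : Fin k, dist (Φ f j.castSucc) (Φ f j.succ) = √2 := fun f =>
    ⟨fun l => layerPt_mem_layers l.isLt (f _).isLt,
      fun l l' h => Fin.ext (by simpa [Φ] using congrArg (· 2) h),
      fun j => dist_layerPt_succ _ _ _⟩
  simpa using card_le_chainCount Φ hΦ hchain

end Layers
theorem chains_lower_R3_odd_general (k : ℕ) (hodd : Odd k) :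
    ∃ c : ℝ, 0 < c ∧ ∃ N : ℕ, ∀ n : ℕ, N ≤ n →
      ∃ (P : Finset (EuclideanSpace ℝ (Fin 3))) (δ : Fin k → ℝ),
        P.card = n ∧ (∀ j, 0 < δ j) ∧
        c * (n : ℝ) ^ ((k + 1) / 2) ≤ (chainCount 3 k P δ : ℝ) := by
  have hm : (k + 2) / 2 = (k + 1) / 2 := by obtain ⟨a, rfl⟩ := hodd; omega
  refine ⟨(2 * (k + 1) : ℝ)⁻¹ ^ ((k + 1) / 2), by positivity, k + 1, fun n hn => ?_⟩
  set t := n / (k + 1)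
  obtain ⟨P, hsub, hcard⟩ := Infinite.exists_superset_card_eq (layers (k + 1) t) n
    ((card_layers_le _ _).trans (Nat.mul_div_le n (k + 1)))
  refine ⟨P, fun _ => √2, hcard, fun _ => by positivity, ?_⟩
  have hchains : t ^ ((k + 1) / 2) ≤ chainCount 3 k P (fun _ => √2) :=
    hm ▸ (pow_le_chainCount_layers k t).trans (chainCount_mono hsub _)
  have ht : (n : ℝ) ≤ 2 * (k + 1) * t := by
    have hn_lt : n < (k + 1) * (t + 1) := Nat.lt_mul_div_succ n (by omega)
    have ht_pos : 1 ≤ t := Nat.div_pos hn (by omega)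
    exact_mod_cast (by nlinarith : n ≤ 2 * (k + 1) * t)
  calc _ = ((n : ℝ) / (2 * (k + 1))) ^ ((k + 1) / 2) := by rw [div_eq_inv_mul, mul_pow]
    _ ≤ (t : ℝ) ^ ((k + 1) / 2) := by gcongr; rw [div_le_iff₀ (by positivity)]; linarith
    _ ≤ _ := by exact_mod_cast hchains

theorem chains_lower_R3_odd (k : ℕ) (hk : 3 ≤ k) (hodd : Odd k) :
    ∃ c : ℝ, 0 < c ∧ ∃ N : ℕ, ∀ n : ℕ, N ≤ n →
      ∃ (P : Finset (EuclideanSpace ℝ (Fin 3))) (δ : Fin k → ℝ),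
        P.card = n ∧ (∀ j, 0 < δ j) ∧
        c * (n : ℝ) ^ ((k + 1) / 2) ≤ (chainCount 3 k P δ : ℝ) :=
  chains_lower_R3_odd_general k hodd
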